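/- The OPT values coincide in the MkU-to-plurality-CCDC reduction: for an MkU instance (U, S, k) with k > 1 and the constructed plurality election (C, V, p), the minimum of |⋃_{S ∈ S'} S| over families S' ⊆ S with |S'| = k equals the minimum of |D| over deletion sets D ⊆ C \ {p} making p the unique plurality winner of (C \ D, V). -/

import Mathlib

/-- Candidates for the MkU construction: `U = Fin n`, buffers `B = Fin (n+1)`,
and the distinguished candidate `p`. -/
abbrev MCand (n : ℕ) := Fin n ⊕ (Fin (n + 1) ⊕ Unit)

/-- The distinguished candidate `p`. -/
def mp {n : ℕ} : MCand n := Sum.inr (Sum.inr ())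

/-- Buffer candidate `b_j`. -/
def mb {n : ℕ} (j : Fin (n + 1)) : MCand n := Sum.inr (Sum.inl j)

/-- Element candidate `u`. -/
def mu {n : ℕ} (u : Fin n) : MCand n := Sum.inl u

/-- `N` = the maximum over `u ∈ U` of the number of sets containing `u`. -/
def NVal {n m : ℕ} (S : Fin m → Finset (Fin n)) : ℕ :=
  Finset.univ.sup (fun u : Fin n => (Finset.univ.filter (fun i => u ∈ S i)).card)

/-- A vote is a preference list (most preferred first); its top choice after
deleting the candidates in `D` is the first surviving entry. -/
def topAfter {C : Type*} [DecidableEq C] (D : Finset C) (l : List C) : Option C :=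
  (l.filter (fun c => decide (c ∉ D))).head?

/-- Plurality score of candidate `c` after deleting `D`: the number of votes
whose top surviving candidate is `c`. -/
def plScore {C : Type*} [DecidableEq C] (votes : List (List C)) (D : Finset C)
    (c : C) : ℕ :=
  votes.countP (fun l => decide (topAfter D l = some c))

/-- Type-1 vote for set `S_i`: members of `S_i`, then `p`, then the rest. -/
noncomputable def type1 {n m : ℕ} (S : Fin m → Finset (Fin n)) (i : Fin m) : List (MCand n) :=
  ((S i).toList.map mu) ++ [mp] ++
    (Finset.univ.toList.filter
      (fun c : MCand n => decide (c ∉ ((S i).image mu ∪ {mp}))))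

/-- Type-2 vote: `b_1 > ⋯ > b_{n+1} > (members of U) > p`. -/
def type2 (n : ℕ) : List (MCand n) :=
  ((List.finRange (n + 1)).map mb) ++ ((List.finRange n).map mu) ++ [mp]

/-- Type-3 vote: `p` first, then the rest. -/
noncomputable def type3 (n : ℕ) : List (MCand n) :=
  mp :: (Finset.univ.toList.filter (fun c : MCand n => decide (c ≠ mp)))

/-- The election's votes: one Type-1 vote per set, `k - 1 + N` Type-2 votes and
`N` Type-3 votes. -/
noncomputable def mkuVotes {n m : ℕ} (S : Fin m → Finset (Fin n)) (k : ℕ) :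
    List (List (MCand n)) :=
  ((List.finRange m).map (type1 S)) ++
    List.replicate (k - 1 + NVal S) (type2 n) ++
    List.replicate (NVal S) (type3 n)

/-!
Deleting the elements of the union of `k` sets lets the votes of those `k` sets go to `p`,
so `p` scores at least `k + N`, while an element keeps at most `N` votes (it lies in at most
`N` sets) and a buffer at most the `k - 1 + N` type-2 votes.

Conversely, a deletion set making `p` win either deletes all `n + 1` buffers, and is then larger
than any union, or leaves a buffer, which collects all `k - 1 + N` type-2 votes. Then `p` only
gets the `N` type-3 votes and the votes of the sets lying entirely in `D`, so at least `k` sets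
lie in `D`, and their union is no larger than `D`.
-/

open Finset

theorem Nat.sInf_eq_sInf_of_forall_exists_le {A B : Set ℕ} (hAB : ∀ a ∈ A, ∃ b ∈ B, b ≤ a)
    (hBA : ∀ b ∈ B, ∃ a ∈ A, a ≤ b) : sInf A = sInf B := by
  rcases A.eq_empty_or_nonempty with rfl | hA
  · have hB : B = ∅ := Set.eq_empty_of_forall_notMem fun b hb => by simpa using hBA b hb
    rw [hB]
  obtain ⟨b₀, hb₀, -⟩ := hAB _ hA.some_mem
  obtain ⟨a, ha, hab⟩ := hBA _ (Nat.sInf_mem ⟨b₀, hb₀⟩)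
  obtain ⟨b, hb, hba⟩ := hAB _ (Nat.sInf_mem hA)
  exact le_antisymm ((Nat.sInf_le ha).trans hab) ((Nat.sInf_le hb).trans hba)

theorem List.countP_finRange {m : ℕ} (p : Fin m → Prop) [DecidablePred p] :
    (List.finRange m).countP (fun i => decide (p i)) = #{i | p i} := by
  rw [Fin.univ_def]
  simp [Finset.filter, Finset.card, List.countP_eq_length_filter, Multiset.filter_coe]

section plurality

variable {C : Type*} [DecidableEq C] {D : Finset C} {l l₁ l₂ : List C} {c : C}

theorem topAfter_append : topAfter D (l₁ ++ l₂) = (topAfter D l₁).or (topAfter D l₂) := by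
  simp only [topAfter, List.filter_append, List.head?_append]

theorem topAfter_cons_of_notMem (hc : c ∉ D) (l : List C) : topAfter D (c :: l) = some c := by
  simp [topAfter, hc]

theorem topAfter_eq_none_iff : topAfter D l = none ↔ ∀ c ∈ l, c ∈ D := by
  simp [topAfter]

theorem mem_of_topAfter_eq_some (h : topAfter D l = some c) : c ∈ l :=
  (List.mem_filter.mp (List.mem_of_mem_head? h)).1

theorem notMem_of_topAfter_eq_some (h : topAfter D l = some c) : c ∉ D := by
  simpa using (List.mem_filter.mp (List.mem_of_mem_head? h)).2

def IsUniquePluralityWinner (votes : List (List C)) (D : Finset C) (p : C) : Prop :=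
  ∀ x, x ∉ D → x ≠ p → plScore votes D x < plScore votes D p

end plurality

section construction

variable {n m : ℕ} {S : Fin m → Finset (Fin n)} {D : Finset (MCand n)}

@[simp] theorem mu_ne_mp (u : Fin n) : (mu u : MCand n) ≠ mp := by simp [mu, mp]
@[simp] theorem mb_ne_mp (j : Fin (n + 1)) : (mb j : MCand n) ≠ mp := by simp [mb, mp]
@[simp] theorem mu_ne_mb (u : Fin n) (j : Fin (n + 1)) : (mu u : MCand n) ≠ mb j := by
  simp [mu, mb]

theorem mu_injective : Function.Injective (mu (n := n)) := fun _ _ h => by simpa [mu] using h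
theorem mb_injective : Function.Injective (mb (n := n)) := fun _ _ h => by simpa [mb] using h

theorem mp_notMem_image_mu (X : Finset (Fin n)) : mp ∉ X.image mu := by simp

theorem card_filter_mem_le_NVal (S : Fin m → Finset (Fin n)) (u : Fin n) :
    #{i | u ∈ S i} ≤ NVal S :=
  Finset.le_sup (f := fun v => #{i | v ∈ S i}) (mem_univ u)

theorem topAfter_type3 (hp : mp ∉ D) : topAfter D (type3 n) = some mp :=
  topAfter_cons_of_notMem hp _

theorem topAfter_type1 (hp : mp ∉ D) (i : Fin m) :
    topAfter D (type1 S i) = (topAfter D ((S i).toList.map mu)).or (some mp) := by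
  rw [type1, topAfter_append, topAfter_append, topAfter_cons_of_notMem hp]
  cases topAfter D ((S i).toList.map mu) <;> rfl

theorem topAfter_type1_eq_mp_iff (hp : mp ∉ D) (i : Fin m) :
    topAfter D (type1 S i) = some mp ↔ (S i).image mu ⊆ D := by
  rw [topAfter_type1 hp]
  cases h : topAfter D ((S i).toList.map mu) with
  | none =>
    rw [topAfter_eq_none_iff] at h
    simpa [Finset.image_subset_iff] using h
  | some c =>
    have hc : ¬ ∀ x ∈ (S i).toList.map mu, x ∈ D := by
      rw [← topAfter_eq_none_iff, h]
      exact Option.some_ne_none c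
    obtain ⟨u, -, rfl⟩ := List.mem_map.mp (mem_of_topAfter_eq_some h)
    simpa [Finset.image_subset_iff] using hc

theorem eq_mp_or_mem_of_topAfter_type1 (hp : mp ∉ D) {i : Fin m} {c : MCand n}
    (h : topAfter D (type1 S i) = some c) : c = mp ∨ ∃ u ∈ S i, mu u = c := by
  rw [topAfter_type1 hp] at h
  cases h' : topAfter D ((S i).toList.map mu) with
  | none => simp_all
  | some c' => 
    rw [h'] at h
    obtain ⟨u, hu, rfl⟩ := List.mem_map.mp (mem_of_topAfter_eq_some h')
    exact .inr ⟨u, by simpa using hu, Option.some_injective _ h⟩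

theorem exists_topAfter_type2_eq_mb (hb : ∃ j, mb j ∉ D) :
    ∃ j, topAfter D (type2 n) = some (mb j) := by
  obtain ⟨j₀, hj₀⟩ := hb
  obtain ⟨c, hc⟩ : ∃ c, topAfter D ((List.finRange (n + 1)).map mb) = some c := by
    refine Option.ne_none_iff_exists'.mp fun h => hj₀ ?_
    exact topAfter_eq_none_iff.mp h _ (List.mem_map_of_mem (List.mem_finRange j₀))
  obtain ⟨j, -, rfl⟩ := List.mem_map.mp (mem_of_topAfter_eq_some hc)
  refine ⟨j, ?_⟩
  rw [type2, topAfter_append, topAfter_append, hc]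
  rfl

def coveredSets (S : Fin m → Finset (Fin n)) (D : Finset (MCand n)) : Finset (Fin m) :=
  {i | (S i).image mu ⊆ D}

theorem plScore_mkuVotes (k : ℕ) (D : Finset (MCand n)) (c : MCand n) :
    plScore (mkuVotes S k) D c = #{i | topAfter D (type1 S i) = some c}
      + (if topAfter D (type2 n) = some c then k - 1 + NVal S else 0)
      + (if topAfter D (type3 n) = some c then NVal S else 0) := by
  simp only [plScore, mkuVotes, List.countP_append, List.countP_map, List.countP_replicate,
    Function.comp_def, decide_eq_true_eq, List.countP_finRange]

theorem plScore_mkuVotes_mp (hp : mp ∉ D) (k : ℕ) :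
    plScore (mkuVotes S k) D mp = #(coveredSets S D)
      + (if topAfter D (type2 n) = some mp then k - 1 + NVal S else 0) + NVal S := by
  simp only [plScore_mkuVotes, topAfter_type1_eq_mp_iff hp, topAfter_type3 hp, if_pos, coveredSets]

theorem plScore_mkuVotes_mu_le (hp : mp ∉ D) (hb : ∃ j, mb j ∉ D) (k : ℕ) (u : Fin n) :
    plScore (mkuVotes S k) D (mu u) ≤ NVal S := by
  obtain ⟨j, hj⟩ := exists_topAfter_type2_eq_mb hb
  have h1 : #{i | topAfter D (type1 S i) = some (mu u)} ≤ #{i | u ∈ S i} := by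
    refine card_le_card (monotone_filter_right _ fun i _ h => ?_)
    rcases eq_mp_or_mem_of_topAfter_type1 hp h with h' | ⟨v, hv, hvu⟩
    · exact absurd h' (mu_ne_mp u)
    · rwa [← mu_injective hvu]
  rw [plScore_mkuVotes, hj, topAfter_type3 hp]
  simpa [(mu_ne_mb u j).symm, (mu_ne_mp u).symm] using
    h1.trans (card_filter_mem_le_NVal S u)

theorem plScore_mkuVotes_mb_le (hp : mp ∉ D) (k : ℕ) (j : Fin (n + 1)) :
    plScore (mkuVotes S k) D (mb j) ≤ k - 1 + NVal S := by
  have h1 : #{i | topAfter D (type1 S i) = some (mb j)} = 0 := by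
    rw [card_eq_zero, filter_eq_empty_iff]
    intro i _ h
    rcases eq_mp_or_mem_of_topAfter_type1 hp h with h' | ⟨v, -, hv⟩
    · exact mb_ne_mp j h'
    · exact mu_ne_mb v j hv
  rw [plScore_mkuVotes, h1, topAfter_type3 hp]
  simp only [Option.some_inj, (mb_ne_mp j).symm, if_false]
  split_ifs <;> omega

theorem le_plScore_mkuVotes_of_topAfter_type2 {c : MCand n} (k : ℕ)
    (h : topAfter D (type2 n) = some c) : k - 1 + NVal S ≤ plScore (mkuVotes S k) D c := by
  rw [plScore_mkuVotes, if_pos h]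
  omega

theorem isUniquePluralityWinner_image_biUnion {k : ℕ} (hk : 0 < k) {T : Finset (Fin m)}
    (hT : #T = k) : IsUniquePluralityWinner (mkuVotes S k) ((T.biUnion S).image mu) mp := by
  set D := (T.biUnion S).image mu
  have hp : mp ∉ D := mp_notMem_image_mu _
  have hb : ∀ j, mb j ∉ D := by simp [D]
  have hT_covered : T ⊆ coveredSets S D := fun i hi => by
    simpa [coveredSets, D] using image_subset_image (subset_biUnion_of_mem S hi)
  have hscore : k + NVal S ≤ plScore (mkuVotes S k) D mp := by
    rw [plScore_mkuVotes_mp hp]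
    have := card_le_card hT_covered
    omega
  rintro (u | j | ⟨⟩) - hx
  · exact (plScore_mkuVotes_mu_le hp ⟨0, hb 0⟩ k u).trans_lt (by omega)
  · exact (plScore_mkuVotes_mb_le hp k j).trans_lt (by omega)
  · exact absurd rfl hx

theorem exists_card_eq_card_biUnion_le {k : ℕ} (hp : mp ∉ D)
    (hw : IsUniquePluralityWinner (mkuVotes S k) D mp) (hb : ∃ j, mb j ∉ D) :
    ∃ T : Finset (Fin m), #T = k ∧ #(T.biUnion S) ≤ #D := by
  obtain ⟨j, hj⟩ := exists_topAfter_type2_eq_mb hb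
  have hwin := hw (mb j) (notMem_of_topAfter_eq_some hj) (mb_ne_mp j)
  have hmb := le_plScore_mkuVotes_of_topAfter_type2 (S := S) k hj
  have hmp : plScore (mkuVotes S k) D mp = #(coveredSets S D) + NVal S := by
    simp [plScore_mkuVotes_mp hp, hj]
  obtain ⟨T, hT_covered, hT⟩ := exists_subset_card_eq (show k ≤ #(coveredSets S D) by omega)
  refine ⟨T, hT, ?_⟩
  calc #(T.biUnion S) = #((T.biUnion S).image mu) := (card_image_of_injective _ mu_injective).symm
    _ ≤ #D := card_le_card <| by
      rw [biUnion_image]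
      exact biUnion_subset.mpr fun i hi => (mem_filter.mp (hT_covered hi)).2

theorem lt_card_of_forall_mb_mem (h : ∀ j, mb j ∈ D) : n < #D := by
  have hsub : univ.image mb ⊆ D := by simpa [image_subset_iff] using h
  have := card_le_card hsub
  rw [card_image_of_injective _ mb_injective, card_univ, Fintype.card_fin] at this
  omega

end construction

theorem stmt11_general {n m : ℕ}
    (S : Fin m → Finset (Fin n))
    (k : ℕ) (hk : 1 < k) (hkm : k ≤ m) :
    sInf {c : ℕ | ∃ T : Finset (Fin m), T.card = k ∧ (T.biUnion S).card = c} =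
    sInf {c : ℕ | ∃ D : Finset (MCand n), mp ∉ D ∧
      (∀ x : MCand n, x ∉ D → x ≠ mp →
        plScore (mkuVotes S k) D x < plScore (mkuVotes S k) D mp) ∧
      D.card = c} := by
  apply Nat.sInf_eq_sInf_of_forall_exists_le
  · rintro _ ⟨T, hT, rfl⟩
    exact ⟨_, ⟨_, mp_notMem_image_mu _, isUniquePluralityWinner_image_biUnion (by omega) hT, rfl⟩,
      (card_image_of_injective _ mu_injective).le⟩
  · rintro _ ⟨D, hp, hw, rfl⟩
    by_cases hb : ∃ j, mb j ∉ D
    · obtain ⟨T, hT, hle⟩ := exists_card_eq_card_biUnion_le hp hw hb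
      exact ⟨_, ⟨T, hT, rfl⟩, hle⟩
    · push Not at hb
      obtain ⟨T, -, hT⟩ := exists_subset_card_eq (s := (univ : Finset (Fin m))) (by simpa using hkm)
      refine ⟨_, ⟨T, hT, rfl⟩, ?_⟩
      calc #(T.biUnion S) ≤ n := (card_le_univ _).trans_eq (Fintype.card_fin n)
        _ ≤ #D := (lt_card_of_forall_mb_mem hb).le

/-- The OPT values coincide in the MkU-to-plurality-CCDC reduction: the minimum
of `|⋃_{S ∈ S'} S|` over families `S' ⊆ S` with `|S'| = k` equals the minimum
of `|D|` over deletion sets `D ⊆ C \ {p}` making `p` the unique plurality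
winner of `(C \ D, V)`. -/
theorem stmt11 {n m : ℕ} (hn : 0 < n)
    (S : Fin m → Finset (Fin n)) (hSne : ∀ i, (S i).Nonempty)
    (k : ℕ) (hk : 1 < k) (hkm : k ≤ m) :
    sInf {c : ℕ | ∃ T : Finset (Fin m), T.card = k ∧ (T.biUnion S).card = c} =
    sInf {c : ℕ | ∃ D : Finset (MCand n), mp ∉ D ∧
      (∀ x : MCand n, x ∉ D → x ≠ mp →
        plScore (mkuVotes S k) D x < plScore (mkuVotes S k) D mp) ∧
      D.card = c} :=
  stmt11_general S k hk hkm
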